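/- Let α be a type with decidable equality, L an even natural number, s : Multiset α, and bins : List (List α) a valid capacity-L packing of s, i.e., (bins.map (fun b => (b : Multiset α))).sum = s, every b ∈ bins has b.length ≤ L, and every b ∈ bins satisfies List.Chain' (· ≠ ·) b. Then for every color a : α, 2 * s.count a ≤ bins.length * L. -/

import Mathlib

/-!
In a bin without two adjacent items of the same colour, the occurrences of a colour `a` are
pairwise non-adjacent, so a bin of length `n` holds at most `⌈n / 2⌉` of them. For even `L` this
is `L / 2` when `n ≤ L`, and summing over the bins gives `2 · count a ≤ #bins · L`.
-/

namespace List

variable {α : Type*} [DecidableEq α]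

theorem IsChain.two_mul_count_le_length_add_one (a : α) :
    ∀ {l : List α}, l.IsChain (· ≠ ·) → 2 * l.count a ≤ l.length + 1
  | [], _ => by simp
  | [x], _ => by by_cases hx : x = a <;> simp [hx]
  | x :: y :: t, .cons_cons hxy hyt => by
    have ht : 2 * t.count a ≤ t.length + 1 := hyt.tail.two_mul_count_le_length_add_one a
    have hxy_count : (x :: y :: t).count a ≤ t.count a + 1 := by
      by_cases hx : x = a <;> by_cases hy : y = a <;> simp_all
    simp only [length_cons] at ht ⊢
    omega

theorem IsChain.two_mul_count_le_of_length_le {l : List α} (hl : l.IsChain (· ≠ ·)) (a : α)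
    {L : ℕ} (hL : Even L) (hlen : l.length ≤ L) : 2 * l.count a ≤ L := by
  have := hl.two_mul_count_le_length_add_one a
  obtain ⟨k, rfl⟩ := hL
  omega

end List

theorem Multiset.count_sum_map_coe {α : Type*} [DecidableEq α] (l : List (List α)) (a : α) :
    (l.map ((↑) : List α → Multiset α)).sum.count a = (l.map (·.count a)).sum := by
  rw [← coe_countAddMonoidHom, map_list_sum, List.map_map]
  simp [Function.comp_def]

theorem even_capacity_packing_count_bound {α : Type*} [DecidableEq α]
    (L : ℕ) (hL : Even L) (s : Multiset α) (bins : List (List α))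
    (hsum : (bins.map (fun b => (b : Multiset α))).sum = s)
    (hlen : ∀ b ∈ bins, b.length ≤ L)
    (hvalid : ∀ b ∈ bins, List.Chain' (· ≠ ·) b) :
    ∀ a : α, 2 * s.count a ≤ bins.length * L := by
  intro a
  -- The coercion in `hsum` elaborates through the list monad, as `bins.flatMap fun b => [↑b]`.
  simp only [List.map_id', List.bind_eq_flatMap, List.pure_def, ← List.map_eq_flatMap] at hsum
  have hbin : ∀ n ∈ bins.map fun b => 2 * b.count a, n ≤ L :=
    List.forall_mem_map.mpr fun b hb =>
      (hvalid b hb).two_mul_count_le_of_length_le a hL (hlen b hb)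
  calc 2 * s.count a = (bins.map fun b => 2 * b.count a).sum := by
        rw [← hsum, Multiset.count_sum_map_coe, List.sum_map_mul_left]
    _ ≤ bins.length • L := by simpa using List.sum_le_card_nsmul _ L hbin
    _ = bins.length * L := smul_eq_mul ..
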